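/- Let m₁, m₂, m₃ > 0 with m₁+m₂+m₃ = 1, let x > 0 satisfy p(x) = 0 where p is the Euler quintic polynomial, and let α > 0. With a₁, a₂, a₃, b₁, b₂, b₃, μ, δ defined as in the context, δ = 1 + β, where β = (m₁(3x²+3x+1) + m₃x²(x²+3x+3)) / (x² + m₂((x+1)²(x²+1) − x²)). -/

import Mathlib

/-!
The Euler quintic is linear in the masses,
`p(x) = m₂(x+1)²(x³-1) + m₃x³(x²+3x+3) - m₁(3x²+3x+1)`,
so at a root `x` it determines `m₁` rationally from `m₂`, `m₃` and `x`. Only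
`√(m₁m₂m₃)² = m₁m₂m₃` enters `δ` and the scale `α` cancels, so `δ` is a ratio of polynomials in
the masses and `x`. Homogenised with `m₁ + m₂ + m₃ = 1`, the claim `δ = 1 + β` becomes a
polynomial identity once `m₁` is eliminated.
-/

/-- `x (1 + x) α μ`. -/
def eulerMuNum (m1 m2 m3 x : ℝ) : ℝ :=
  m1 * m2 * (1 + x) + m1 * m3 * x + m2 * m3 * (x * (1 + x))

/-- `x³ (1 + x)³ α μ δ`. -/
def eulerDeltaNum (m1 m2 m3 x : ℝ) : ℝ :=
  m3 * (1 + x) ^ 3 * (m2 + (1 + x) * m1) ^ 2 + m2 * x ^ 3 * (m3 - x * m1) ^ 2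
    + m1 * x ^ 3 * (1 + x) ^ 3 * ((1 + x) * m3 + x * m2) ^ 2

theorem eulerDeltaNum_mul_eq (m1 m2 m3 x : ℝ)
    (hp : m1 * (3 * x ^ 2 + 3 * x + 1)
      = m2 * (x + 1) ^ 2 * (x ^ 3 - 1) + m3 * x ^ 3 * (x ^ 2 + 3 * x + 3)) :
    eulerDeltaNum m1 m2 m3 x * ((m1 + m3) * x ^ 2 + m2 * (x + 1) ^ 2 * (x ^ 2 + 1))
      = x ^ 2 * (1 + x) ^ 2 * eulerMuNum m1 m2 m3 x * (m1 + m2 + m3)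
        * ((m1 + m3) * x ^ 2 + m2 * (x + 1) ^ 2 * (x ^ 2 + 1)
          + (m1 * (3 * x ^ 2 + 3 * x + 1) + m3 * x ^ 2 * (x ^ 2 + 3 * x + 3))) := by
  have hC : 3 * x ^ 2 + 3 * x + 1 ≠ 0 := by nlinarith [sq_nonneg (2 * x + 1)]
  -- `field_simp` loops unless `C` is kept atomic
  set C := 3 * x ^ 2 + 3 * x + 1 with hC_def
  rw [← eq_div_iff hC] at hp
  subst hp
  unfold eulerDeltaNum eulerMuNum
  field_simp
  rw [hC_def]
  ring

theorem eulerDeltaNum_div_eq_one_add_beta (m1 m2 m3 x : ℝ)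
    (hm1 : 0 < m1) (hm2 : 0 < m2) (hm3 : 0 < m3) (hsum : m1 + m2 + m3 = 1) (hx : 0 < x)
    (hp : (m3 + m2) * x ^ 5 + (3 * m3 + 2 * m2) * x ^ 4 + (3 * m3 + m2) * x ^ 3
        - (3 * m1 + m2) * x ^ 2 - (3 * m1 + 2 * m2) * x - (m1 + m2) = 0) :
    eulerDeltaNum m1 m2 m3 x / (x ^ 2 * (1 + x) ^ 2 * eulerMuNum m1 m2 m3 x)
      = 1 + (m1 * (3 * x ^ 2 + 3 * x + 1) + m3 * x ^ 2 * (x ^ 2 + 3 * x + 3))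
          / (x ^ 2 + m2 * ((x + 1) ^ 2 * (x ^ 2 + 1) - x ^ 2)) := by
  have key := eulerDeltaNum_mul_eq m1 m2 m3 x (by linear_combination -hp)
  rw [hsum, mul_one] at key
  have hD : x ^ 2 + m2 * ((x + 1) ^ 2 * (x ^ 2 + 1) - x ^ 2)
      = (m1 + m3) * x ^ 2 + m2 * (x + 1) ^ 2 * (x ^ 2 + 1) := by
    linear_combination -x ^ 2 * hsum
  have hT : 0 < eulerMuNum m1 m2 m3 x := by unfold eulerMuNum; positivity
  rw [hD]
  field_simp
  linear_combination key

theorem euler_delta_eq_one_add_beta (m1 m2 m3 x α : ℝ)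
    (hm1 : 0 < m1) (hm2 : 0 < m2) (hm3 : 0 < m3)
    (hsum : m1 + m2 + m3 = 1) (hx : 0 < x) (hα : 0 < α)
    (hp : (m3 + m2) * x ^ 5 + (3 * m3 + 2 * m2) * x ^ 4 + (3 * m3 + m2) * x ^ 3
        - (3 * m1 + m2) * x ^ 2 - (3 * m1 + 2 * m2) * x - (m1 + m2) = 0)
    (a1 a2 a3 b1 b2 b3 μ δ : ℝ)
    (ha1 : a1 = -(m3 + (1 - m1) * x) * α)
    (ha2 : a2 = (m1 * x - m3) * α)
    (ha3 : a3 = ((1 - m3) + m1 * x) * α)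
    (hb1 : b1 = Real.sqrt (m1 * m2 * m3) / m1 * α)
    (hb2 : b2 = -(Real.sqrt (m1 * m2 * m3) / m2) * (1 + x) * α)
    (hb3 : b3 = Real.sqrt (m1 * m2 * m3) / m3 * x * α)
    (hμ : μ = m1 * m2 / |a1 - a2| + m1 * m3 / |a1 - a3| + m2 * m3 / |a2 - a3|)
    (hδ : δ = (m1 * m2 * (b1 - b2) ^ 2 / |a1 - a2| ^ 3
        + m1 * m3 * (b1 - b3) ^ 2 / |a1 - a3| ^ 3
        + m2 * m3 * (b2 - b3) ^ 2 / |a2 - a3| ^ 3) / μ) :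
    δ = 1 + (m1 * (3 * x ^ 2 + 3 * x + 1) + m3 * x ^ 2 * (x ^ 2 + 3 * x + 3))
        / (x ^ 2 + m2 * ((x + 1) ^ 2 * (x ^ 2 + 1) - x ^ 2)) := by
  have h12 : |a1 - a2| = x * α := by
    rw [abs_sub_comm, show a2 - a1 = x * α by rw [ha1, ha2]; ring, abs_of_pos (by positivity)]
  have h13 : |a1 - a3| = (1 + x) * α := by
    rw [abs_sub_comm, show a3 - a1 = (1 + x) * α by rw [ha1, ha3]; ring,
      abs_of_pos (by positivity)]
  have h23 : |a2 - a3| = α := by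
    rw [abs_sub_comm, show a3 - a2 = α by rw [ha2, ha3]; ring, abs_of_pos hα]
  have hs := Real.sq_sqrt (by positivity : 0 ≤ m1 * m2 * m3)
  have e12 : (b1 - b2) ^ 2 = m1 * m2 * m3 * ((1 / m1 + (1 + x) / m2) * α) ^ 2 := by
    rw [hb1, hb2]; linear_combination ((1 / m1 + (1 + x) / m2) * α) ^ 2 * hs
  have e13 : (b1 - b3) ^ 2 = m1 * m2 * m3 * ((1 / m1 - x / m3) * α) ^ 2 := by
    rw [hb1, hb3]; linear_combination ((1 / m1 - x / m3) * α) ^ 2 * hs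
  have e23 : (b2 - b3) ^ 2 = m1 * m2 * m3 * (((1 + x) / m2 + x / m3) * α) ^ 2 := by
    rw [hb2, hb3]; linear_combination (((1 + x) / m2 + x / m3) * α) ^ 2 * hs
  rw [← eulerDeltaNum_div_eq_one_add_beta m1 m2 m3 x hm1 hm2 hm3 hsum hx hp, hδ, hμ,
    h12, h13, h23, e12, e13, e23]
  unfold eulerDeltaNum eulerMuNum
  field_simp
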